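/- Let C be an additive idempotent complete category with weak kernels and weak cokernels. Then C has n-kernels if and only if C has n-cokernels. -/

import Mathlib

/-!
Iterating weak kernels gives a sequence `⋯ → K₂ → K₁ → X → Y` of `f` that is exact on
representables `C(-, ·)`. Comparing it with an `n`-cokernel of `k : K_{n+2} → K_{n+1}` and
lifting step by step, starting from the epimorphism at the end of the `n`-cokernel, shows that
`k` is von Neumann regular: `k ≫ t ≫ k = k` for some `t`. Then `𝟙 - t ≫ k` is an idempotent of
`K_{n+1}` killing `k`; its image `W` maps monomorphically to `K_n`, as a weak kernel of
`K_n → K_{n-1}`, so `W → K_n → ⋯ → X → Y` is an `n`-kernel of `f`. The converse is dual.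
-/

open CategoryTheory CategoryTheory.Limits

namespace Paper


variable {C : Type*} [Category C] [Preadditive C]

/-- Exactness of the sequence of contravariant representable functors at interior position `i`. -/
def YExactAt {m : ℕ} (T : ComposableArrows C m) (i : ℕ) (h : i + 2 ≤ m) : Prop :=
  T.map' i (i+1) (by omega) (by omega) ≫ T.map' (i+1) (i+2) (by omega) h = 0 ∧
  ∀ (W : C) (u : W ⟶ T.obj' (i+1) (by omega)),
    u ≫ T.map' (i+1) (i+2) (by omega) h = 0 →
      ∃ v : W ⟶ T.obj' i (by omega), v ≫ T.map' i (i+1) (by omega) (by omega) = u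

/-- Exactness of the sequence of covariant representable functors at interior position `i`. -/
def CoYExactAt {m : ℕ} (T : ComposableArrows C m) (i : ℕ) (h : i + 2 ≤ m) : Prop :=
  T.map' i (i+1) (by omega) (by omega) ≫ T.map' (i+1) (i+2) (by omega) h = 0 ∧
  ∀ (W : C) (u : T.obj' (i+1) (by omega) ⟶ W),
    T.map' i (i+1) (by omega) (by omega) ≫ u = 0 →
      ∃ v : T.obj' (i+2) h ⟶ W, T.map' (i+1) (i+2) (by omega) h ≫ v = u

/-- `T = [X_n → ⋯ → X_1 → X → Y]` is such that `X_n → ⋯ → X` is an `n`-kernel of the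
last map `X ⟶ Y`, i.e. `0 → C(-,X_n) → ⋯ → C(-,X) → C(-,Y)` is exact. -/
def IsNKernelSeq (n : ℕ) (T : ComposableArrows C (n+1)) : Prop :=
  Mono (T.map' 0 1 (by omega) (by omega)) ∧ ∀ (i : ℕ) (h : i + 2 ≤ n + 1), YExactAt T i h

/-- `T = [X → Y → Y_1 → ⋯ → Y_n]` is such that `Y → ⋯ → Y_n` is an `n`-cokernel of the
first map `X ⟶ Y`, i.e. `0 → C(Y_n,-) → ⋯ → C(Y,-) → C(X,-)` is exact. -/
def IsNCokernelSeq (n : ℕ) (T : ComposableArrows C (n+1)) : Prop :=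
  Epi (T.map' n (n+1) (by omega) (by omega)) ∧ ∀ (i : ℕ) (h : i + 2 ≤ n + 1), CoYExactAt T i h

/-- `T` is an `n`-exact sequence. -/
def IsNExactSeq (n : ℕ) (T : ComposableArrows C (n+1)) : Prop :=
  IsNKernelSeq n T ∧ IsNCokernelSeq n T

/-- The category `C` has `n`-kernels. -/
def HasNKernels (C : Type*) [Category C] [Preadditive C] (n : ℕ) : Prop :=
  ∀ ⦃X Y : C⦄ (f : X ⟶ Y), ∃ (T : ComposableArrows C (n+1))
    (hX : T.obj' n (by omega) = X) (hY : T.obj' (n+1) (by omega) = Y),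
      T.map' n (n+1) (by omega) (by omega) = eqToHom hX ≫ f ≫ eqToHom hY.symm ∧
      IsNKernelSeq n T

/-- The category `C` has `n`-cokernels. -/
def HasNCokernels (C : Type*) [Category C] [Preadditive C] (n : ℕ) : Prop :=
  ∀ ⦃X Y : C⦄ (f : X ⟶ Y), ∃ (T : ComposableArrows C (n+1))
    (hX : T.obj' 0 (by omega) = X) (hY : T.obj' 1 (by omega) = Y),
      T.map' 0 1 (by omega) (by omega) = eqToHom hX ≫ f ≫ eqToHom hY.symm ∧
      IsNCokernelSeq n T

/-- Axiom (A2): every monomorphism, together with any of its `n`-cokernels, forms an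
`n`-exact sequence. -/
def AxiomA2 (C : Type*) [Category C] [Preadditive C] (n : ℕ) : Prop :=
  ∀ (T : ComposableArrows C (n+1)), Mono (T.map' 0 1 (by omega) (by omega)) →
    IsNCokernelSeq n T → IsNExactSeq n T

/-- Axiom (A2ᵒᵖ): every epimorphism, together with any of its `n`-kernels, forms an
`n`-exact sequence. -/
def AxiomA2op (C : Type*) [Category C] [Preadditive C] (n : ℕ) : Prop :=
  ∀ (T : ComposableArrows C (n+1)), Epi (T.map' n (n+1) (by omega) (by omega)) →
    IsNKernelSeq n T → IsNExactSeq n T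

/-- Jasso's axioms for an `n`-abelian category. -/
def IsNAbelian (C : Type*) [Category C] [Preadditive C] (n : ℕ) : Prop :=
  HasNKernels C n ∧ HasNCokernels C n ∧ AxiomA2 C n ∧ AxiomA2op C n

/-- `C` has weak kernels. -/
def HasWeakKernelsP (C : Type*) [Category C] [Preadditive C] : Prop :=
  ∀ ⦃Y Z : C⦄ (g : Y ⟶ Z), ∃ (X : C) (f : X ⟶ Y), f ≫ g = 0 ∧
    ∀ ⦃W : C⦄ (u : W ⟶ Y), u ≫ g = 0 → ∃ v : W ⟶ X, v ≫ f = u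

/-- `C` has weak cokernels. -/
def HasWeakCokernelsP (C : Type*) [Category C] [Preadditive C] : Prop :=
  ∀ ⦃X Y : C⦄ (f : X ⟶ Y), ∃ (Z : C) (g : Y ⟶ Z), f ≫ g = 0 ∧
    ∀ ⦃W : C⦄ (u : Y ⟶ W), f ≫ u = 0 → ∃ v : Z ⟶ W, g ≫ v = u

/-- A category is von Neumann regular if every morphism factors as a split epimorphism
followed by a split monomorphism. -/
def VonNeumannRegular (C : Type*) [Category C] : Prop :=
  ∀ ⦃X Y : C⦄ (f : X ⟶ Y), ∃ (W : C) (p : X ⟶ W) (j : W ⟶ Y),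
    IsSplitEpi p ∧ IsSplitMono j ∧ p ≫ j = f

end Paper

open Paper

lemma CategoryTheory.Arrow.mk_comp_eqToHom {C : Type*} [Category C] {X Y Y' : C} (f : X ⟶ Y)
    (h : Y = Y') : Arrow.mk (f ≫ eqToHom h) = Arrow.mk f := by
  subst h
  simp

namespace Paper

variable {C : Type*} [Category C]

def IsVonNeumannRegularHom {X Y : C} (f : X ⟶ Y) : Prop :=
  ∃ t : Y ⟶ X, f ≫ t ≫ f = f

variable [Preadditive C]

-- `YExactAt T i h` unfolds to `IsWeakKernel (T.map' i (i + 1)) (T.map' (i + 1) (i + 2))`, and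
-- `CoYExactAt T i h` to the corresponding `IsWeakCokernel`; the two are used interchangeably.
def IsWeakKernel {X Y Z : C} (f : X ⟶ Y) (g : Y ⟶ Z) : Prop :=
  f ≫ g = 0 ∧ ∀ ⦃W : C⦄ (u : W ⟶ Y), u ≫ g = 0 → ∃ v : W ⟶ X, v ≫ f = u

def IsWeakCokernel {X Y Z : C} (f : X ⟶ Y) (g : Y ⟶ Z) : Prop :=
  f ≫ g = 0 ∧ ∀ ⦃W : C⦄ (u : Y ⟶ W), f ≫ u = 0 → ∃ v : Z ⟶ W, g ≫ v = u

lemma hasNKernels_iff {n : ℕ} :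
    HasNKernels C n ↔ ∀ ⦃X Y : C⦄ (f : X ⟶ Y), ∃ T : ComposableArrows C (n + 1),
      Arrow.mk (T.map' n (n + 1)) = Arrow.mk f ∧ IsNKernelSeq n T := by
  simp only [HasNKernels, Arrow.mk_eq_mk_iff, exists_and_right]

lemma hasNCokernels_iff {n : ℕ} :
    HasNCokernels C n ↔ ∀ ⦃X Y : C⦄ (f : X ⟶ Y), ∃ T : ComposableArrows C (n + 1),
      Arrow.mk (T.map' 0 1) = Arrow.mk f ∧ IsNCokernelSeq n T := by
  simp only [HasNCokernels, Arrow.mk_eq_mk_iff, exists_and_right]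

lemma IsWeakCokernel.comp_eqToHom_of_arrow_eq {X Y Y' Z Z' : C} {f : X ⟶ Y} {g : Y ⟶ Z}
    (hfg : IsWeakCokernel f g) {g' : Y' ⟶ Z'} (hg : Arrow.mk g' = Arrow.mk g) (h : Y = Y') :
    IsWeakCokernel (f ≫ eqToHom h) g' := by
  obtain ⟨hY, hZ, rfl⟩ := (Arrow.mk_eq_mk_iff _ _).1 hg
  subst hY hZ
  simpa using hfg

lemma IsWeakKernel.exists_mono_isWeakKernel [IsIdempotentComplete C] {K B A Z : C}
    {k : K ⟶ B} {f : B ⟶ A} {g : A ⟶ Z} (hk : IsWeakKernel k f) (hf : IsWeakKernel f g)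
    (hreg : IsVonNeumannRegularHom k) :
    ∃ (W : C) (i : W ⟶ B), Mono (i ≫ f) ∧ IsWeakKernel (i ≫ f) g := by
  obtain ⟨t, ht⟩ := hreg
  have hidem : (𝟙 B - t ≫ k) ≫ (𝟙 B - t ≫ k) = 𝟙 B - t ≫ k := by
    simp [Preadditive.sub_comp, Preadditive.comp_sub, ht]
  obtain ⟨W, i, e, hie, hei⟩ := IsIdempotentComplete.idempotents_split B _ hidem
  have hke : k ≫ e = 0 := by
    calc k ≫ e = (k ≫ e ≫ i) ≫ e := by simp [hie]
      _ = 0 := by rw [hei, Preadditive.comp_sub, Category.comp_id, ht, sub_self, zero_comp]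
  have hif : e ≫ i ≫ f = f := by
    rw [← Category.assoc, hei, Preadditive.sub_comp, Category.assoc, hk.1, comp_zero,
      Category.id_comp, sub_zero]
  refine ⟨W, i, ?_, by simp [hf.1], ?_⟩
  · rw [Preadditive.mono_iff_cancel_zero]
    intro V v hv
    obtain ⟨z, hz⟩ := hk.2 (v ≫ i) (by simpa using hv)
    calc v = v ≫ i ≫ e := by rw [hie, Category.comp_id]
      _ = z ≫ k ≫ e := by rw [← Category.assoc, ← hz, Category.assoc]
      _ = 0 := by rw [hke, comp_zero]
  · intro V u hu
    obtain ⟨v, rfl⟩ := hf.2 u hu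
    exact ⟨v ≫ e, by rw [Category.assoc, hif]⟩

lemma IsWeakCokernel.exists_epi_isWeakCokernel [IsIdempotentComplete C] {Z A B K : C}
    {g : Z ⟶ A} {f : A ⟶ B} {k : B ⟶ K} (hf : IsWeakCokernel g f) (hk : IsWeakCokernel f k)
    (hreg : IsVonNeumannRegularHom k) :
    ∃ (W : C) (p : B ⟶ W), Epi (f ≫ p) ∧ IsWeakCokernel g (f ≫ p) := by
  obtain ⟨t, ht⟩ := hreg
  have hidem : (𝟙 B - k ≫ t) ≫ (𝟙 B - k ≫ t) = 𝟙 B - k ≫ t := by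
    simp [Preadditive.sub_comp, Preadditive.comp_sub, reassoc_of% ht]
  obtain ⟨W, i, e, hie, hei⟩ := IsIdempotentComplete.idempotents_split B _ hidem
  have hik : i ≫ k = 0 := by
    calc i ≫ k = i ≫ (e ≫ i) ≫ k := by simp [reassoc_of% hie]
      _ = 0 := by rw [hei, Preadditive.sub_comp, Category.id_comp, Category.assoc, ht,
        sub_self, comp_zero]
  have hfe : f ≫ e ≫ i = f := by
    rw [hei, Preadditive.comp_sub, ← Category.assoc, hk.1, zero_comp, Category.comp_id,
      sub_zero]
  refine ⟨W, e, ?_, by simp [reassoc_of% hf.1], ?_⟩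
  · rw [Preadditive.epi_iff_cancel_zero]
    intro V v hv
    obtain ⟨z, hz⟩ := hk.2 (e ≫ v) (by simpa using hv)
    calc v = i ≫ e ≫ v := by rw [← Category.assoc, hie, Category.id_comp]
      _ = i ≫ k ≫ z := by rw [hz]
      _ = 0 := by rw [← Category.assoc, hik, zero_comp]
  · intro V u hu
    obtain ⟨v, rfl⟩ := hf.2 u hu
    exact ⟨i ≫ v, by simp [reassoc_of% hfe]⟩

lemma IsNCokernelSeq.exists_homotopy {n : ℕ} {T : ComposableArrows C (n + 1)}
    (hT : IsNCokernelSeq n T) {S : ComposableArrows C (n + 2)} (hS : ∀ i h, YExactAt S i h)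
    (j : ℕ) (hj : j ≤ n) (c : T.obj' (j + 1) ⟶ S.obj' (j + 1))
    (hc : T.map' j (j + 1) ≫ c ≫ S.map' (j + 1) (j + 2) = 0) :
    ∃ d : T.obj' (j + 1) ⟶ S.obj' j,
      T.map' j (j + 1) ≫ c = T.map' j (j + 1) ≫ d ≫ S.map' j (j + 1) := by
  induction hj using Nat.decreasingInduction with
  | self =>
    have := hT.1
    obtain ⟨d, hd⟩ := (hS n (by omega)).2 _ c ((cancel_epi _).1 (hc.trans comp_zero.symm))
    exact ⟨d, by rw [hd]⟩
  | of_succ j hj ih =>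
    obtain ⟨c', hc'⟩ := (hT.2 j (by omega)).2 _ (c ≫ S.map' (j + 1) (j + 2)) hc
    obtain ⟨d', hd'⟩ := ih c' (by
      rw [← Category.assoc, hc', Category.assoc, (hS (j + 1) (by omega)).1, comp_zero])
    obtain ⟨d, hd⟩ := (hS j (by omega)).2 _ (c - T.map' (j + 1) (j + 2) ≫ d') (by
      rw [Preadditive.sub_comp, Category.assoc, ← hd', hc', sub_self])
    refine ⟨d, ?_⟩
    rw [hd, Preadditive.comp_sub, ← Category.assoc (T.map' j (j + 1)), (hT.2 j (by omega)).1,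
      zero_comp, sub_zero]

lemma IsNKernelSeq.exists_homotopy {n : ℕ} {T : ComposableArrows C (n + 1)}
    (hT : IsNKernelSeq n T) {S : ComposableArrows C (n + 2)} (hS : ∀ i h, CoYExactAt S i h)
    (j : ℕ) (hj : j ≤ n) (c : S.obj' (j + 1) ⟶ T.obj' j)
    (hc : S.map' j (j + 1) ≫ c ≫ T.map' j (j + 1) = 0) :
    ∃ d : S.obj' (j + 2) ⟶ T.obj' j,
      c ≫ T.map' j (j + 1) = S.map' (j + 1) (j + 2) ≫ d ≫ T.map' j (j + 1) := by
  induction j with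
  | zero =>
    have := hT.1
    obtain ⟨d, hd⟩ := (hS 0 (by omega)).2 _ c
      ((cancel_mono _).1 (by rw [Category.assoc, zero_comp]; exact hc))
    exact ⟨d, by rw [← Category.assoc, hd]⟩
  | succ j ih =>
    obtain ⟨c', hc'⟩ := (hT.2 j (by omega)).2 _ (S.map' (j + 1) (j + 2) ≫ c)
      (by rw [Category.assoc]; exact hc)
    obtain ⟨d', hd'⟩ := ih (by omega) c' (by
      rw [hc', ← Category.assoc, (hS j (by omega)).1, zero_comp])
    obtain ⟨d, hd⟩ := (hS (j + 1) (by omega)).2 _ (c - d' ≫ T.map' j (j + 1)) (by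
      rw [Preadditive.comp_sub, ← hd', hc', sub_self])
    refine ⟨d, ?_⟩
    rw [← Category.assoc, hd, Preadditive.sub_comp, Category.assoc, (hT.2 j (by omega)).1,
      comp_zero, sub_zero]

lemma isVonNeumannRegularHom_of_hasNCokernels {n : ℕ} (hco : HasNCokernels C n)
    {S : ComposableArrows C (n + 2)} (hS : ∀ i h, YExactAt S i h) :
    IsVonNeumannRegularHom (S.map' 0 1) := by
  obtain ⟨T, hX, hY, hT01, hT⟩ := hco (S.map' 0 1)
  obtain ⟨d, hd⟩ := hT.exists_homotopy hS 0 (by omega) (eqToHom hY)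
    (by simp only [hT01, Category.assoc, eqToHom_trans_assoc, eqToHom_refl, Category.id_comp,
      (hS 0 (by omega)).1, comp_zero])
  simp only [hT01, Category.assoc, eqToHom_trans, eqToHom_refl, Category.comp_id,
    cancel_epi] at hd
  exact ⟨eqToHom hY.symm ≫ d, by simpa only [Category.assoc] using hd.symm⟩

lemma isVonNeumannRegularHom_of_hasNKernels {n : ℕ} (hker : HasNKernels C n)
    {S : ComposableArrows C (n + 2)} (hS : ∀ i h, CoYExactAt S i h) :
    IsVonNeumannRegularHom (S.map' (n + 1) (n + 2)) := by
  obtain ⟨T, hX, hY, hTn, hT⟩ := hker (S.map' (n + 1) (n + 2))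
  obtain ⟨d, hd⟩ := hT.exists_homotopy hS n le_rfl (eqToHom hX.symm)
    (by simp only [hTn, eqToHom_trans_assoc, eqToHom_refl, Category.id_comp,
      reassoc_of% (hS n (by omega)).1, zero_comp])
  simp only [hTn, eqToHom_trans_assoc, eqToHom_refl, Category.id_comp] at hd
  simp only [← Category.assoc, cancel_mono] at hd
  exact ⟨d ≫ eqToHom hX, by simpa only [Category.assoc] using hd.symm⟩

lemma exists_weakKernelSeq (hwk : HasWeakKernelsP C) {X Y : C} (f : X ⟶ Y) (m : ℕ) :
    ∃ S : ComposableArrows C (m + 1),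
      Arrow.mk (S.map' m (m + 1)) = Arrow.mk f ∧ ∀ i h, YExactAt S i h := by
  induction m with
  | zero => exact ⟨ComposableArrows.mk₁ f, rfl, fun i h => by omega⟩
  | succ m ih =>
    obtain ⟨S, hf, hS⟩ := ih
    obtain ⟨K, k, hk⟩ := hwk (S.map' 0 1)
    refine ⟨S.precomp k, hf, ?_⟩
    rintro (_ | i) h
    · exact hk
    · exact hS i (by omega)

lemma exists_weakCokernelSeq (hwc : HasWeakCokernelsP C) (m : ℕ) {X Y : C} (f : X ⟶ Y) :
    ∃ S : ComposableArrows C (m + 1),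
      Arrow.mk (S.map' 0 1) = Arrow.mk f ∧ ∀ i h, CoYExactAt S i h := by
  induction m generalizing X Y with
  | zero => exact ⟨ComposableArrows.mk₁ f, rfl, fun i h => by omega⟩
  | succ m ih =>
    obtain ⟨Z, g, hg⟩ := hwc f
    obtain ⟨S, hSg, hS⟩ := ih g
    have hY : S.obj' 0 = Y := congrArg Arrow.left hSg
    refine ⟨S.precomp (f ≫ eqToHom hY.symm), Arrow.mk_comp_eqToHom f _, ?_⟩
    rintro (_ | i) h
    · exact IsWeakCokernel.comp_eqToHom_of_arrow_eq hg hSg _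
    · exact hS i (by omega)

lemma isNKernelSeq_precomp {n : ℕ} {F : ComposableArrows C (n + 1)} {W : C} {w : W ⟶ F.left}
    (hmono : Mono w) (hw : IsWeakKernel w (F.map' 0 1)) (hF : ∀ i h, YExactAt F i h) :
    IsNKernelSeq (n + 1) (F.precomp w) := by
  refine ⟨hmono, ?_⟩
  rintro (_ | i) h
  · exact hw
  · exact hF i (by omega)

lemma exists_isNCokernelSeq_of_isVonNeumannRegularHom [IsIdempotentComplete C] (m : ℕ)
    (S : ComposableArrows C (m + 3)) (hS : ∀ i h, CoYExactAt S i h)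
    (hreg : IsVonNeumannRegularHom (S.map' (m + 2) (m + 3))) :
    ∃ T : ComposableArrows C (m + 2),
      Arrow.mk (T.map' 0 1) = Arrow.mk (S.map' 0 1) ∧ IsNCokernelSeq (m + 1) T := by
  induction m with
  | zero =>
    obtain ⟨W, p, hepi, hp⟩ :=
      IsWeakCokernel.exists_epi_isWeakCokernel (hS 0 (by omega)) (hS 1 (by omega)) hreg
    refine ⟨ComposableArrows.mk₂ (S.map' 0 1) (S.map' 1 2 ≫ p), rfl, hepi, ?_⟩
    intro i h
    obtain rfl : i = 0 := by omega
    exact hp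
  | succ m ih =>
    obtain ⟨T, hT01, hT⟩ := ih S.δ₀ (fun i h => hS (i + 1) (by omega)) hreg
    have h0 : T.obj' 0 = S.obj' 1 := congrArg Arrow.left hT01
    refine ⟨T.precomp (S.map' 0 1 ≫ eqToHom h0.symm), Arrow.mk_comp_eqToHom _ _, hT.1, ?_⟩
    rintro (_ | i) h
    · exact IsWeakCokernel.comp_eqToHom_of_arrow_eq (hS 0 (by omega)) hT01 _
    · exact hT.2 i (by omega)

theorem hasNKernels_of_hasNCokernels [IsIdempotentComplete C] (hwk : HasWeakKernelsP C)
    {n : ℕ} (hn : 1 ≤ n) (hco : HasNCokernels C n) : HasNKernels C n := by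
  obtain ⟨n, rfl⟩ : ∃ m, n = m + 1 := ⟨n - 1, by omega⟩
  rw [hasNKernels_iff]
  intro X Y f
  obtain ⟨S, hf, hS⟩ := exists_weakKernelSeq hwk f (n + 2)
  obtain ⟨W, i, hmono, hi⟩ := IsWeakKernel.exists_mono_isWeakKernel (hS 0 (by omega))
    (hS 1 (by omega)) (isVonNeumannRegularHom_of_hasNCokernels hco hS)
  exact ⟨S.δ₀.δ₀.precomp (i ≫ S.map' 1 2), hf,
    isNKernelSeq_precomp hmono hi fun j h => hS (j + 2) (by omega)⟩

theorem hasNCokernels_of_hasNKernels [IsIdempotentComplete C] (hwc : HasWeakCokernelsP C)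
    {n : ℕ} (hn : 1 ≤ n) (hker : HasNKernels C n) : HasNCokernels C n := by
  obtain ⟨n, rfl⟩ : ∃ m, n = m + 1 := ⟨n - 1, by omega⟩
  rw [hasNCokernels_iff]
  intro X Y f
  obtain ⟨S, hf, hS⟩ := exists_weakCokernelSeq hwc (n + 2) f
  obtain ⟨T, hT01, hT⟩ := exists_isNCokernelSeq_of_isVonNeumannRegularHom n S hS
    (isVonNeumannRegularHom_of_hasNKernels hker hS)
  exact ⟨T, hT01.trans hf, hT⟩

end Paper

theorem stmt_8_general {C : Type*} [Category C] [Preadditive C] [IsIdempotentComplete C]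
    (hwk : HasWeakKernelsP C) (hwc : HasWeakCokernelsP C) (n : ℕ) (hn : 1 ≤ n) :
    HasNKernels C n ↔ HasNCokernels C n :=
  ⟨hasNCokernels_of_hasNKernels hwc hn, hasNKernels_of_hasNCokernels hwk hn⟩

/-- If an additive idempotent complete category has weak kernels and weak cokernels, then
it has `n`-kernels if and only if it has `n`-cokernels. -/
theorem stmt_8 {C : Type*} [Category C] [Preadditive C] [HasZeroObject C]
    [HasFiniteBiproducts C] [IsIdempotentComplete C]
    (hwk : HasWeakKernelsP C) (hwc : HasWeakCokernelsP C) (n : ℕ) (hn : 1 ≤ n) :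
    HasNKernels C n ↔ HasNCokernels C n :=
  stmt_8_general hwk hwc n hn
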